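/- arXiv:1111.5966 — 2 statements merged into one kernel-verified Lean document; each statement's English description precedes it below -/
import Mathlib

section
/- Let K ⊂ ℝ be compact and let 𝓑_K be the set of all Birkhoff sequences whose rotation number lies in K. Then the quotient 𝓑_K/ℤ of 𝓑_K by the action of integer vertical translations x ↦ x + n (n ∈ ℤ) is compact in the topology of pointwise convergence. Equivalently: every sequence (x^n) in 𝓑_K admits integers m_n ∈ ℤ such that a subsequence of (x^n + m_n) converges pointwise to an element of 𝓑_K. -/
open Filter Topology

/-- The shift map `τ_{k,l}`: `(τ_{k,l} x) i = x (i - k) + l`. -/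
def tau (k l : ℤ) (x : ℤ → ℝ) : ℤ → ℝ := fun i => x (i - k) + (l : ℝ)

/-- A sequence is Birkhoff (well-ordered) if its integer translates are totally ordered
in the pointwise partial order. -/
def Birkhoff (x : ℤ → ℝ) : Prop :=
  ∀ k l k' l' : ℤ, tau k l x ≤ tau k' l' x ∨ tau k' l' x ≤ tau k l x

/-- `x` has rotation number `ω` if `x n / n → ω` as `n → ±∞`. -/
def HasRotNum (x : ℤ → ℝ) (ω : ℝ) : Prop :=
  Tendsto (fun n : ℤ => x n / (n : ℝ)) atTop (𝓝 ω) ∧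
  Tendsto (fun n : ℤ => x n / (n : ℝ)) atBot (𝓝 ω)

/-- A Birkhoff sequence of rotation number `ω` is maximally periodic if `τ_{k,l} x = x`
whenever `-ω k + l = 0`. -/
def MaxPeriodic (ω : ℝ) (x : ℤ → ℝ) : Prop :=
  ∀ k l : ℤ, -ω * (k : ℝ) + (l : ℝ) = 0 → tau k l x = x

/-- Partial derivative of a function on sequence space with respect to coordinate `i`. -/
noncomputable def pd (F : (ℤ → ℝ) → ℝ) (i : ℤ) : (ℤ → ℝ) → ℝ :=
  fun x => deriv (fun t => F (Function.update x i t)) (x i)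

/-- Iterated partial derivatives along a list of coordinates. -/
noncomputable def pdList (F : (ℤ → ℝ) → ℝ) : List ℤ → (ℤ → ℝ) → ℝ
  | [] => F
  | i :: L => pd (pdList F L) i

/-- `F` and `G` are `ε`-close in the `C^k` norm: all iterated partial derivatives of order
`≤ k` of the difference are bounded by `ε`. -/
def CkClose (k : ℕ) (ε : ℝ) (F G : (ℤ → ℝ) → ℝ) : Prop :=
  ∀ L : List ℤ, L.length ≤ k → ∀ x : ℤ → ℝ, |pdList (fun y => F y - G y) L x| ≤ ε

/-- Conditions A-E on a family of local potentials `S j : ℝ^ℤ → ℝ`, with range `r` and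
uniform derivative bound `C`. -/
structure SatisfiesAE (r : ℕ) (C : ℝ) (S : ℤ → (ℤ → ℝ) → ℝ) : Prop where
  r_pos : 1 ≤ r
  C_pos : 0 < C
  /- A: finite range -/
  finRange : ∀ j : ℤ, ∀ x y : ℤ → ℝ, (∀ i : ℤ, |i - j| ≤ (r : ℤ) → x i = y i) → S j x = S j y
  /- A: C² smoothness -/
  contS : ∀ j : ℤ, Continuous (S j)
  diff1 : ∀ j i : ℤ, ∀ x : ℤ → ℝ, DifferentiableAt ℝ (fun t => S j (Function.update x i t)) (x i)
  diff2 : ∀ j i k : ℤ, ∀ x : ℤ → ℝ,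
    DifferentiableAt ℝ (fun t => pd (S j) i (Function.update x k t)) (x k)
  cont1 : ∀ j i : ℤ, Continuous (pd (S j) i)
  cont2 : ∀ j i k : ℤ, Continuous (pd (pd (S j) i) k)
  /- B: shift invariance -/
  shiftInv : ∀ j k l : ℤ, ∀ x : ℤ → ℝ, S j x = S (j + k) (tau k l x)
  /- C: coercivity -/
  coercive : ∀ j k : ℤ, |k - j| = 1 → ∀ M : ℝ, ∃ R : ℝ, ∀ x : ℤ → ℝ, R ≤ |x k - x j| → M ≤ S j x
  /- D: monotonicity -/
  mono : ∀ j i k : ℤ, i ≠ k → ∀ x : ℤ → ℝ, pd (pd (S j) i) k x ≤ 0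
  monoStrict : ∀ j k : ℤ, |j - k| = 1 → ∀ x : ℤ → ℝ, pd (pd (S j) j) k x < 0
  /- E: bounded derivatives -/
  bdd1 : ∀ j i : ℤ, ∀ x : ℤ → ℝ, |pd (S j) i x| ≤ C
  bdd2 : ∀ j i k : ℤ, ∀ x : ℤ → ℝ, |pd (pd (S j) i) k x| ≤ C

/-- The periodic action `W_p(x) = ∑_{j=1}^p S_j(x)`. -/
noncomputable def Wper (S : ℤ → (ℤ → ℝ) → ℝ) (p : ℕ) (x : ℤ → ℝ) : ℝ :=
  ∑ j ∈ Finset.Icc (1 : ℤ) (p : ℤ), S j x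

/-- A `(p,q)`-periodic minimizer: `τ_{p,q} x = x` and `x` minimizes `W_p` over `X_{p,q}`. -/
def PerMin (S : ℤ → (ℤ → ℝ) → ℝ) (p : ℕ) (q : ℤ) (x : ℤ → ℝ) : Prop :=
  tau (p : ℤ) q x = x ∧ ∀ y : ℤ → ℝ, tau (p : ℤ) q y = y → Wper S p x ≤ Wper S p y

/-- The (formally convergent, by finite range) energy difference `W(x+y) - W(x)`. -/
noncomputable def Wdiff (S : ℤ → (ℤ → ℝ) → ℝ) (x y : ℤ → ℝ) : ℝ :=
  ∑' j : ℤ, (S j (fun i => x i + y i) - S j x)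

/-- `x` is a global minimizer: every finite-support variation does not decrease the energy. -/
def GlobalMin (S : ℤ → (ℤ → ℝ) → ℝ) (x : ℤ → ℝ) : Prop :=
  ∀ y : ℤ → ℝ, (Function.support y).Finite → 0 ≤ Wdiff S x y

/-- The extended orbit `Σ_y = { y k + l : k, l ∈ ℤ }`. -/
def extOrbit (y : ℤ → ℝ) : Set ℝ := {ξ : ℝ | ∃ k l : ℤ, ξ = y k + (l : ℝ)}

/-!
If `x` is Birkhoff with rotation number `ω` and `k > 0`, then `τ_{k,l} x` and `x` are comparable;
`x ≤ τ_{k,l} x` iterates to `x (n k) ≤ x 0 + n l` and forces `ω k ≤ l`, and symmetrically.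
Taking `l = ⌈ω k⌉ - 1` and `l = ⌊ω k⌋ + 1` gives `|x j - x 0 - ω j| ≤ 1`. Translated so that
`x 0 ∈ [0, 1)`, the sequences of `𝓑_K` therefore lie in a closed subset of `K` times a product of
compact intervals; the displacement bound, being a closed condition, survives in the limit and
gives back the rotation number.
-/

lemma mul_le_of_forall_le_add {f : ℤ → ℝ} {ω c : ℝ}
    (hf : Tendsto (fun n : ℤ => f n / n) atTop (𝓝 ω)) {k : ℕ} (hk : 0 < k)
    (h : ∀ i, f (i + k) ≤ f i + c) : ω * k ≤ c := by
  have hkR : (0 : ℝ) < k := by exact_mod_cast hk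
  have hiter : ∀ n : ℕ, f (n * k) ≤ f 0 + n * c := by
    intro n
    induction n with
    | zero => simp
    | succ n ih =>
      have hstep := h (n * k)
      push_cast at hstep ⊢
      rw [add_mul, one_mul]
      linarith
  have hnk : Tendsto (fun n : ℕ => ((n : ℤ) * k)) atTop atTop :=
    tendsto_natCast_atTop_atTop.atTop_mul_const' (by exact_mod_cast hk)
  have hnkR : Tendsto (fun n : ℕ => ((n : ℝ) * k)) atTop atTop :=
    tendsto_natCast_atTop_atTop.atTop_mul_const hkR
  have hbound : Tendsto (fun n : ℕ => f 0 / (n * k) + c / k) atTop (𝓝 (c / k)) := by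
    simpa using (tendsto_const_nhds.div_atTop hnkR).add_const (c / k)
  have hle : ω ≤ c / k := by
    refine le_of_tendsto_of_tendsto (hf.comp hnk) hbound ?_
    filter_upwards [eventually_ge_atTop 1] with n hn
    have hpos : (0 : ℝ) < n * k := by positivity
    simp only [Function.comp_apply]
    push_cast
    rw [show f 0 / (n * k) + c / k = (f 0 + n * c) / (n * k) by field_simp]
    gcongr
    exact_mod_cast hiter n
  exact (le_div_iff₀ hkR).mp hle

lemma le_mul_of_forall_add_le {f : ℤ → ℝ} {ω c : ℝ}
    (hf : Tendsto (fun n : ℤ => f n / n) atTop (𝓝 ω)) {k : ℕ} (hk : 0 < k)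
    (h : ∀ i, f i + c ≤ f (i + k)) : c ≤ ω * k := by
  have hneg : Tendsto (fun n : ℤ => -f n / n) atTop (𝓝 (-ω)) := by
    simpa only [neg_div] using hf.neg
  have := mul_le_of_forall_le_add (f := fun n => -f n) (c := -c) hneg hk fun i => by
    linarith [h i]
  linarith

lemma tendsto_div_of_abs_sub_mul_le {x : ℤ → ℝ} {ω C : ℝ} {l : Filter ℤ}
    (hl : Tendsto (fun n : ℤ => (n : ℝ)) l (Bornology.cobounded ℝ))
    (h : ∀ n : ℤ, |x n - ω * n| ≤ C) : Tendsto (fun n : ℤ => x n / n) l (𝓝 ω) := by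
  have hnorm : Tendsto (fun n : ℤ => ‖(n : ℝ)‖) l atTop :=
    tendsto_norm_atTop_iff_cobounded.mpr hl
  have hO : (fun n : ℤ => x n - ω * n) =O[l] fun _ => (1 : ℝ) :=
    Asymptotics.IsBigO.of_bound C (Eventually.of_forall fun n => by simpa using h n)
  have ho : (fun _ => (1 : ℝ)) =o[l] fun n : ℤ => (n : ℝ) :=
    (Asymptotics.isLittleO_one_left_iff ℝ).mpr hnorm
  have hlim := ((hO.trans_isLittleO ho).tendsto_div_nhds_zero).add_const ω
  rw [zero_add] at hlim
  refine hlim.congr' ?_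
  filter_upwards [hnorm.eventually_gt_atTop 0] with n hn
  field_simp [norm_pos_iff.mp hn]
  ring

lemma hasRotNum_of_abs_sub_mul_le {x : ℤ → ℝ} {ω C : ℝ} (h : ∀ n : ℤ, |x n - ω * n| ≤ C) :
    HasRotNum x ω :=
  ⟨tendsto_div_of_abs_sub_mul_le tendsto_intCast_atTop_cobounded h,
    tendsto_div_of_abs_sub_mul_le tendsto_intCast_atBot_cobounded h⟩

lemma isClosed_setOf_birkhoff : IsClosed {x : ℤ → ℝ | Birkhoff x} := by
  have hτ : ∀ k l, Continuous (tau k l) := fun k l => by unfold tau; fun_prop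
  simp only [Birkhoff, Set.ofPred_forall, Set.ofPred_or]
  exact isClosed_iInter fun k => isClosed_iInter fun l => isClosed_iInter fun k' =>
    isClosed_iInter fun l' =>
      (isClosed_le (hτ k l) (hτ k' l')).union (isClosed_le (hτ k' l') (hτ k l))

namespace Birkhoff

variable {x : ℤ → ℝ} {ω : ℝ}

lemma add_const (hx : Birkhoff x) (c : ℝ) : Birkhoff fun i => x i + c := by
  intro k l k' l'
  rcases hx k l k' l' with h | h <;> simp only [Pi.le_def, tau] at h ⊢
  · exact Or.inl fun i => by linarith [h i]
  · exact Or.inr fun i => by linarith [h i]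

lemma forall_add_le_or (hx : Birkhoff x) (k l : ℤ) :
    (∀ i, x i + l ≤ x (i + k)) ∨ ∀ i, x (i + k) ≤ x i + l := by
  have hτ : tau 0 0 x = x := by ext i; simp [tau]
  rcases hx k l 0 0 with h | h <;> rw [hτ] at h
  · exact Or.inl fun i => by simpa [tau] using h (i + k)
  · exact Or.inr fun i => by simpa [tau] using h (i + k)

lemma add_le_of_lt (hx : Birkhoff x) (hω : Tendsto (fun n : ℤ => x n / n) atTop (𝓝 ω))
    {k : ℕ} (hk : 0 < k) {l : ℤ} (hl : l < ω * k) (i : ℤ) :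
    x i + l ≤ x (i + k) :=
  (hx.forall_add_le_or k l).resolve_right
    (fun h => (mul_le_of_forall_le_add hω hk h).not_gt hl) i

lemma le_add_of_lt (hx : Birkhoff x) (hω : Tendsto (fun n : ℤ => x n / n) atTop (𝓝 ω))
    {k : ℕ} (hk : 0 < k) {l : ℤ} (hl : ω * k < l) (i : ℤ) :
    x (i + k) ≤ x i + l :=
  (hx.forall_add_le_or k l).resolve_left
    (fun h => (le_mul_of_forall_add_le hω hk h).not_gt hl) i

lemma abs_add_sub_sub_mul_le_one (hx : Birkhoff x)
    (hω : Tendsto (fun n : ℤ => x n / n) atTop (𝓝 ω)) (i : ℤ) (k : ℕ) :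
    |x (i + k) - x i - ω * k| ≤ 1 := by
  rcases k.eq_zero_or_pos with rfl | hk
  · simp
  have hlow := hx.add_le_of_lt hω hk (l := ⌈ω * k⌉ - 1)
    (by push_cast; linarith [Int.ceil_lt_add_one (ω * k)]) i
  have hup := hx.le_add_of_lt hω hk (l := ⌊ω * k⌋ + 1)
    (by push_cast; linarith [Int.lt_floor_add_one (ω * k)]) i
  push_cast at hlow hup
  rw [abs_le]
  constructor <;> linarith [Int.le_ceil (ω * k), Int.floor_le (ω * k)]

lemma abs_sub_sub_mul_le_one (hx : Birkhoff x) (hω : Tendsto (fun n : ℤ => x n / n) atTop (𝓝 ω))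
    (j : ℤ) : |x j - x 0 - ω * j| ≤ 1 := by
  obtain ⟨k, rfl | rfl⟩ := Int.eq_nat_or_neg j
  · simpa using hx.abs_add_sub_sub_mul_le_one hω 0 k
  · have := hx.abs_add_sub_sub_mul_le_one hω (-k) k
    rw [neg_add_cancel, ← abs_neg] at this
    convert this using 2
    push_cast
    ring

end Birkhoff

/-- Representatives of `𝓑_K / ℤ`, paired with their rotation number `ω`, which is recorded by the
bound `|x j - x 0 - ω j| ≤ 1`: unlike the limit defining `ω`, a closed condition. -/
def normalizedBirkhoff (K : Set ℝ) : Set (ℝ × (ℤ → ℝ)) :=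
  {p | p.1 ∈ K ∧ Birkhoff p.2 ∧ p.2 0 ∈ Set.Icc 0 1 ∧ ∀ j : ℤ, |p.2 j - p.2 0 - p.1 * j| ≤ 1}

lemma isClosed_normalizedBirkhoff {K : Set ℝ} (hK : IsClosed K) :
    IsClosed (normalizedBirkhoff K) := by
  simp only [normalizedBirkhoff, Set.ofPred_and, Set.ofPred_forall]
  exact (hK.preimage continuous_fst).inter <|
    (isClosed_setOf_birkhoff.preimage continuous_snd).inter <|
    (isClosed_Icc.preimage (by fun_prop)).inter <|
    isClosed_iInter fun j => isClosed_le (by fun_prop) continuous_const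

lemma isCompact_normalizedBirkhoff {K : Set ℝ} (hK : IsCompact K) :
    IsCompact (normalizedBirkhoff K) := by
  obtain ⟨B, hB⟩ := hK.isBounded.exists_norm_le
  refine (hK.prod (isCompact_univ_pi fun j : ℤ =>
    isCompact_Icc (a := -(2 + B * |(j : ℝ)|)) (b := 2 + B * |(j : ℝ)|))).of_isClosed_subset
    (isClosed_normalizedBirkhoff hK.isClosed) ?_
  rintro ⟨ω, y⟩ ⟨hω, -, ⟨hy0, hy1⟩, hy⟩
  refine ⟨hω, fun j _ => abs_le.mp ?_⟩
  have hωj : |ω * j| ≤ B * |(j : ℝ)| := by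
    rw [abs_mul]
    exact mul_le_mul_of_nonneg_right (hB ω hω) (abs_nonneg _)
  calc |y j| = |(y j - y 0 - ω * j) + y 0 + ω * j| := by ring_nf
    _ ≤ |y j - y 0 - ω * j| + |y 0| + |ω * j| := abs_add_three _ _ _
    _ ≤ 1 + 1 + B * |(j : ℝ)| := by
      gcongr
      · exact hy j
      · exact abs_le.mpr ⟨by linarith, hy1⟩
    _ = 2 + B * |(j : ℝ)| := by ring

lemma mk_floor_mem_normalizedBirkhoff {K : Set ℝ} {x : ℤ → ℝ} {ω : ℝ} (hx : Birkhoff x)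
    (hω : Tendsto (fun n : ℤ => x n / n) atTop (𝓝 ω)) (hωK : ω ∈ K) :
    (ω, fun i => x i + ((-⌊x 0⌋ : ℤ) : ℝ)) ∈ normalizedBirkhoff K := by
  refine ⟨hωK, hx.add_const _, ⟨?_, ?_⟩, fun j => ?_⟩
  · push_cast; linarith [Int.floor_le (x 0)]
  · push_cast; linarith [Int.lt_floor_add_one (x 0)]
  · convert hx.abs_sub_sub_mul_le_one hω j using 2
    ring

lemma birkhoff_and_hasRotNum_of_mem_normalizedBirkhoff {K : Set ℝ} {p : ℝ × (ℤ → ℝ)}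
    (hp : p ∈ normalizedBirkhoff K) : Birkhoff p.2 ∧ ∃ ω ∈ K, HasRotNum p.2 ω := by
  obtain ⟨hωK, hB, -, hdisp⟩ := hp
  refine ⟨hB, p.1, hωK, hasRotNum_of_abs_sub_mul_le (C := 1 + |p.2 0|) fun j => ?_⟩
  calc |p.2 j - p.1 * j| = |(p.2 j - p.2 0 - p.1 * j) + p.2 0| := by ring_nf
    _ ≤ |p.2 j - p.2 0 - p.1 * j| + |p.2 0| := abs_add_le _ _
    _ ≤ 1 + |p.2 0| := by gcongr; exact hdisp j

/-- For compact `K ⊂ ℝ`, the set of Birkhoff sequences with rotation number in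
`K`, modulo integer vertical translations, is compact for pointwise convergence: every
sequence in `𝓑_K` admits integer translates of which a subsequence converges pointwise to
an element of `𝓑_K`. -/
theorem birkhoff_mod_translation_compact
    (K : Set ℝ) (hK : IsCompact K) (x : ℕ → ℤ → ℝ)
    (hx : ∀ n, Birkhoff (x n) ∧ ∃ ω ∈ K, HasRotNum (x n) ω) :
    ∃ (m : ℕ → ℤ) (φ : ℕ → ℕ) (xinf : ℤ → ℝ), StrictMono φ ∧
      (Birkhoff xinf ∧ ∃ ω ∈ K, HasRotNum xinf ω) ∧
      ∀ i : ℤ, Filter.Tendsto (fun n => x (φ n) i + (m (φ n) : ℝ)) Filter.atTop (𝓝 (xinf i)) := by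
  choose ω hωK hω using fun n => (hx n).2
  obtain ⟨⟨Ω, xinf⟩, hlim, φ, hφ, hconv⟩ := (isCompact_normalizedBirkhoff hK).tendsto_subseq
    fun n => mk_floor_mem_normalizedBirkhoff (hx n).1 (hω n).1 (hωK n)
  refine ⟨fun n => -⌊x n 0⌋, φ, xinf, hφ,
    birkhoff_and_hasRotNum_of_mem_normalizedBirkhoff hlim, fun i => ?_⟩
  exact (((continuous_apply i).comp continuous_snd).tendsto _).comp hconv
end

section
/- For every n ∈ ℕ with n ≥ 1 and every (p,q) ∈ ℕ×ℤ with p ≥ 1, the set of Birkhoff sequences that are (np,nq)-periodic equals the set of Birkhoff sequences that are (p,q)-periodic: 𝓑_{np,nq} = 𝓑_{p,q}. In other words, the periods of a periodic Birkhoff sequence can be chosen relatively prime. -/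
open Filter Topology

open Function

/-! A Birkhoff sequence `x` is comparable with its translate `τ_{p,q} x`, and `τ_{p,q}` is
monotone, so the orbit `n ↦ τ_{p,q}^n x = τ_{np,nq} x` is monotone or antitone. A monotone orbit that
returns to `x` after `n ≥ 1` steps must already be constant. -/

theorem Monotone.isFixedPt_of_isPeriodicPt {α : Type*} [PartialOrder α] {f : α → α}
    (hf : Monotone f) {x : α} (hx : f x ≤ x ∨ x ≤ f x) {n : ℕ} (hn : 0 < n)
    (hper : IsPeriodicPt f n x) : IsFixedPt f x := by
  rcases hx with hdown | hup
  · have h : f^[n] x ≤ f x := hf.antitone_iterate_of_map_le hdown hn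
    rw [hper.eq] at h
    exact le_antisymm hdown h
  · have h : f x ≤ f^[n] x := hf.monotone_iterate_of_le_map hup hn
    rw [hper.eq] at h
    exact le_antisymm h hup

theorem tau_zero_zero (x : ℤ → ℝ) : tau 0 0 x = x := by
  funext i
  simp [tau]

theorem tau_tau (k l k' l' : ℤ) (x : ℤ → ℝ) :
    tau k l (tau k' l' x) = tau (k + k') (l + l') x := by
  funext i
  simp only [tau, sub_sub, Int.cast_add]
  ring_nf

theorem tau_monotone (k l : ℤ) : Monotone (tau k l) :=
  fun _ _ h i => add_le_add_left (h (i - k)) _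

theorem iterate_tau (k l : ℤ) (n : ℕ) : (tau k l)^[n] = tau (n * k) (n * l) := by
  induction n with
  | zero => funext x; simp [tau_zero_zero]
  | succ n ih =>
    funext x
    rw [iterate_succ_apply', ih, tau_tau]
    congr 1 <;> push_cast <;> ring

theorem Birkhoff.tau_le_or_le_tau {x : ℤ → ℝ} (hx : Birkhoff x) (k l : ℤ) :
    tau k l x ≤ x ∨ x ≤ tau k l x := by
  simpa only [tau_zero_zero] using hx k l 0 0

theorem birkhoff_periods_relatively_prime_general
    (n p : ℕ) (hn : 1 ≤ n) (q : ℤ) :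
    {x : ℤ → ℝ | Birkhoff x ∧ tau ((n * p : ℕ) : ℤ) ((n : ℤ) * q) x = x} =
    {x : ℤ → ℝ | Birkhoff x ∧ tau (p : ℤ) q x = x} := by
  have hiter : tau ((n * p : ℕ) : ℤ) ((n : ℤ) * q) = (tau (p : ℤ) q)^[n] := by
    rw [iterate_tau, Nat.cast_mul]
  ext x
  simp only [Set.mem_ofPred_eq, hiter]
  refine and_congr_right fun hB => ⟨fun hper => ?_, fun hfix => IsFixedPt.iterate hfix n⟩
  exact (tau_monotone p q).isFixedPt_of_isPeriodicPt (hB.tau_le_or_le_tau p q) hn hper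

/-- Periodic Birkhoff sequences are as periodic as they can be:
`𝓑_{np,nq} = 𝓑_{p,q}` for every `n ≥ 1`. -/
theorem birkhoff_periods_relatively_prime
    (n p : ℕ) (hn : 1 ≤ n) (hp : 1 ≤ p) (q : ℤ) :
    {x : ℤ → ℝ | Birkhoff x ∧ tau ((n * p : ℕ) : ℤ) ((n : ℤ) * q) x = x} =
    {x : ℤ → ℝ | Birkhoff x ∧ tau (p : ℤ) q x = x} :=
  birkhoff_periods_relatively_prime_general n p hn q
end
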